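/- arXiv:2403.18440 — 5 statements merged into one kernel-verified Lean document; each statement's English description precedes it below -/
import Mathlib

section
/- Let (X,d,μ) be a metric measure space, (U,φ) an n-dimensional chart on X, and 𝒞 a collection of metric spaces containing a space Y₀ with a non-trivial geodesic (an isometric embedding γ : [a,b] → Y₀ with a < b). If for every Y ∈ 𝒞, every Lipschitz map U → Y admits a metric differential with respect to (U,φ), then every real-valued Lipschitz function f : U → ℝ admits a metric differential with respect to (U,φ). -/
open MeasureTheory Filter Set Metric
open scoped ENNReal NNReal Topology RealInnerProductSpace

noncomputable section

abbrev Euc (n : ℕ) : Type := EuclideanSpace ℝ (Fin n)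

/-- The pointwise Lipschitz constant of `g` at `x`, restricted to the set `s`. -/
def lipWithin {X Y : Type*} [MetricSpace X] [MetricSpace Y]
    (g : X → Y) (s : Set X) (x : X) : ℝ :=
  Filter.limsup (fun y => dist (g y) (g x) / dist y x) (𝓝[s \ {x}] x)

/-- `p : ℝⁿ → ℝ` is (the function of) a seminorm. -/
def IsSeminormFn {n : ℕ} (p : Euc n → ℝ) : Prop :=
  ∃ s : Seminorm ℝ (Euc n), ∀ v, p v = s v

/-- `f : A ⊂ X → Y` admits a metric differential with respect to the chart `(U, φ)`. -/
def HasMetricDiff {X Y : Type*} [MetricSpace X] [MeasurableSpace X] [MetricSpace Y] {n : ℕ}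
    (μ : Measure X) (U : Set X) (φ : X → Euc n) (A : Set X) (f : X → Y) : Prop :=
  ∃ md : X → Euc n → ℝ,
    (∀ x ∈ A ∩ U, IsSeminormFn (md x)) ∧
    (∀ v : Euc n, Measurable fun x => md x v) ∧
    ∀ᵐ x ∂μ.restrict (A ∩ U),
      Tendsto (fun y => |dist (f y) (f x) - md x (φ y - φ x)| / dist y x)
        (𝓝[A \ {x}] x) (𝓝 0)

/-- `(U, φ)` is an `n`-dimensional chart. -/
def IsChart {X : Type*} [MetricSpace X] [MeasurableSpace X] {n : ℕ}
    (μ : Measure X) (U : Set X) (φ : X → Euc n) : Prop :=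
  MeasurableSet U ∧ 0 < μ U ∧ ∃ K : ℝ≥0, LipschitzWith K φ

/-- Condition (*): all directional slopes of `φ` are positive a.e. on `U`. -/
def ChartStar {X : Type*} [MetricSpace X] [MeasurableSpace X] {n : ℕ}
    (μ : Measure X) (U : Set X) (φ : X → Euc n) : Prop :=
  ∀ v : Euc n, ‖v‖ = 1 →
    ∀ᵐ x ∂μ.restrict U, 0 < lipWithin (fun y => (inner ℝ v (φ y) : ℝ)) U x

/-- `f` is `L`-bi-Lipschitz on `s`. -/
def BiLipschitzOn {X Y : Type*} [MetricSpace X] [MetricSpace Y]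
    (L : ℝ) (f : X → Y) (s : Set X) : Prop :=
  ∀ x ∈ s, ∀ y ∈ s, L⁻¹ * dist x y ≤ dist (f x) (f y) ∧ dist (f x) (f y) ≤ L * dist x y

/-- `(X, d, μ)` is `n`-rectifiable. -/
def IsRectifiable (n : ℕ) (X : Type*) [MetricSpace X] [MeasurableSpace X] [BorelSpace X]
    (μ : Measure X) : Prop :=
  μ ≪ μH[(n : ℝ)] ∧
  ∃ (E : ℕ → Set (Euc n)) (ψ : ℕ → Euc n → X) (K : ℕ → ℝ≥0),
    (∀ i, MeasurableSet (E i)) ∧ (∀ i, LipschitzOnWith (K i) (ψ i) (E i)) ∧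
    μ ((⋃ i, ψ i '' E i)ᶜ) = 0

/-- `(U, φ)` is a weak Cheeger chart: every Lipschitz function `X → ℝ` has a unique
linear differential at `μ`-a.e. point of `U`, with the limit taken within `U`. -/
def IsWeakCheegerChart {X : Type*} [MetricSpace X] [MeasurableSpace X] {n : ℕ}
    (μ : Measure X) (U : Set X) (φ : X → Euc n) : Prop :=
  IsChart μ U φ ∧
  ∀ (f : X → ℝ) (K : ℝ≥0), LipschitzWith K f →
    ∀ᵐ x ∂μ.restrict U, ∃! L : Euc n →ₗ[ℝ] ℝ,
      Tendsto (fun y => |f y - f x - L (φ y - φ x)| / dist y x) (𝓝[U \ {x}] x) (𝓝 0)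

/-- `(U, φ)` is a Cheeger chart: as a weak Cheeger chart, but with the limit
taken in all of `X`. -/
def IsCheegerChart {X : Type*} [MetricSpace X] [MeasurableSpace X] {n : ℕ}
    (μ : Measure X) (U : Set X) (φ : X → Euc n) : Prop :=
  IsChart μ U φ ∧
  ∀ (f : X → ℝ) (K : ℝ≥0), LipschitzWith K f →
    ∀ᵐ x ∂μ.restrict U, ∃! L : Euc n →ₗ[ℝ] ℝ,
      Tendsto (fun y => |f y - f x - L (φ y - φ x)| / dist y x) (𝓝[≠] x) (𝓝 0)

/-! After a McShane extension `f` is Lipschitz on all of `X`. Following the geodesic `γ` after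
rescaling `f` so that the window `[k - 1, k + 2]` of values fills `[a, b]` gives Lipschitz maps
`g k : X → Y₀`. Near a point `x` with `⌊f x⌋ = k` the map `g k` does not clamp, so its distances
are those of `f` times `(b - a) / 3`; dividing the metric differential of `g k` by that factor
and choosing `k = ⌊f x⌋`, which depends measurably on `x`, gives a metric differential of `f`. -/

theorem IsSeminormFn.const_mul {n : ℕ} {p : Euc n → ℝ} (hp : IsSeminormFn p) {r : ℝ}
    (hr : 0 ≤ r) : IsSeminormFn fun v => r * p v := by
  obtain ⟨s, hs⟩ := hp
  refine ⟨r.toNNReal • s, fun v => ?_⟩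
  show r * p v = _
  rw [hs v, smul_apply, NNReal.smul_def, smul_eq_mul, Real.coe_toNNReal _ hr]

theorem tendsto_abs_dist_sub_inv_mul_div {X Y Z : Type*} [MetricSpace X] [MetricSpace Y]
    [MetricSpace Z] {n : ℕ} {φ : X → Euc n} {f : X → Y} {g : X → Z} {p : Euc n → ℝ} {x : X}
    {l : Filter X} {c : ℝ} (hc : 0 < c)
    (hg : Tendsto (fun y => |dist (g y) (g x) - p (φ y - φ x)| / dist y x) l (𝓝 0))
    (hfg : ∀ᶠ y in l, dist (g y) (g x) = c * dist (f y) (f x)) :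
    Tendsto (fun y => |dist (f y) (f x) - c⁻¹ * p (φ y - φ x)| / dist y x) l (𝓝 0) := by
  have hscaled := hg.const_mul c⁻¹
  rw [mul_zero] at hscaled
  refine hscaled.congr' (hfg.mono fun y hy => ?_)
  have hsub : dist (f y) (f x) - c⁻¹ * p (φ y - φ x)
      = c⁻¹ * (dist (g y) (g x) - p (φ y - φ x)) := by
    rw [hy]; field_simp
  dsimp only
  rw [hsub, abs_mul, abs_of_pos (inv_pos.mpr hc), mul_div_assoc]

theorem HasMetricDiff.of_eventually_dist_eq_mul {X Y Z κ : Type*} [MetricSpace X]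
    [MeasurableSpace X] [MetricSpace Y] [MetricSpace Z] [Countable κ] [MeasurableSpace κ]
    [MeasurableSingletonClass κ] {n : ℕ} {μ : Measure X} {U A : Set X} {φ : X → Euc n}
    {f : X → Y} {g : κ → X → Z} {idx : X → κ} {c : ℝ} (hAU : MeasurableSet (A ∩ U))
    (hg : ∀ k, HasMetricDiff μ U φ A (g k)) (hidx : Measurable idx) (hc : 0 < c)
    (hfg : ∀ x ∈ A ∩ U, ∀ᶠ y in 𝓝[A \ {x}] x,
      dist (g (idx x) y) (g (idx x) x) = c * dist (f y) (f x)) :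
    HasMetricDiff μ U φ A f := by
  choose md hsemi hmeas htend using hg
  refine ⟨fun x v => c⁻¹ * md (idx x) x v, fun x hx => (hsemi (idx x) x hx).const_mul
    (inv_nonneg.mpr hc.le), fun v => ?_, ?_⟩
  · have hjoint : Measurable fun p : X × κ => md p.2 p.1 v :=
      measurable_from_prod_countable_left fun k => hmeas k v
    exact (hjoint.comp (measurable_id.prodMk hidx)).const_mul _
  · filter_upwards [ae_all_iff.mpr htend, ae_restrict_mem hAU] with x hx hxAU
    exact tendsto_abs_dist_sub_inv_mul_div hc (hx (idx x)) (hfg x hxAU)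

theorem lipschitzWith_comp_projIcc {Y : Type*} [MetricSpace Y] {a b : ℝ} (hab : a ≤ b)
    {γ : ℝ → Y} (hγ : ∀ s ∈ Icc a b, ∀ t ∈ Icc a b, dist (γ s) (γ t) = |s - t|) :
    LipschitzWith 1 fun t => γ (projIcc a b hab t) := by
  refine LipschitzWith.of_dist_le_mul fun s t => ?_
  rw [hγ _ (projIcc a b hab s).2 _ (projIcc a b hab t).2, NNReal.coe_one, one_mul,
    Real.dist_eq]
  exact_mod_cast abs_projIcc_sub_projIcc hab

theorem exists_lipschitz_dist_eq_mul_near_floor {X Y : Type*} [MetricSpace X] [MetricSpace Y]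
    {a b : ℝ} (hab : a < b) {γ : ℝ → Y}
    (hγ : ∀ s ∈ Icc a b, ∀ t ∈ Icc a b, dist (γ s) (γ t) = |s - t|) {F : X → ℝ} {K : ℝ≥0}
    (hF : LipschitzWith K F) :
    ∃ (c : ℝ≥0) (g : ℤ → X → Y), 0 < c ∧ (∀ k, LipschitzWith (c * K) (g k)) ∧
      ∀ x, ∀ᶠ y in 𝓝 x, dist (g ⌊F x⌋ y) (g ⌊F x⌋ x) = c * dist (F y) (F x) := by
  set c : ℝ≥0 := ((b - a) / 3).toNNReal
  have hc : (c : ℝ) = (b - a) / 3 := Real.coe_toNNReal _ (by linarith)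
  have hc_pos : 0 < (c : ℝ) := by rw [hc]; linarith
  set rescale : ℤ → ℝ → ℝ := fun k t => a + c * (t - k + 1)
  have hrescale_mem : ∀ (k : ℤ) t, t ∈ Icc ((k : ℝ) - 1) (k + 2) → rescale k t ∈ Icc a b := by
    intro k t ht
    constructor <;> nlinarith [ht.1, ht.2]
  refine ⟨c, fun k x => γ (projIcc a b hab.le (rescale k (F x))), NNReal.coe_pos.mp hc_pos,
    fun k => ?_, fun x => ?_⟩
  · have hrescale : LipschitzWith c (rescale k) := by
      refine LipschitzWith.of_dist_le_mul fun s t => le_of_eq ?_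
      rw [Real.dist_eq, Real.dist_eq, ← abs_of_pos hc_pos, ← abs_mul]
      simp only [rescale]
      ring_nf
    have hcomp := (lipschitzWith_comp_projIcc hab.le hγ).comp (hrescale.comp hF)
    rwa [one_mul] at hcomp
  · have hnear : ∀ᶠ y in 𝓝 x, |F y - F x| < 1 :=
      hF.continuous.continuousAt.eventually (eventually_abs_sub_lt (F x) one_pos)
    filter_upwards [hnear] with y hy
    have hx₀ := Int.floor_le (F x)
    have hx₁ := Int.lt_floor_add_one (F x)
    obtain ⟨hy₀, hy₁⟩ := abs_lt.mp hy
    rw [hγ _ (projIcc a b hab.le _).2 _ (projIcc a b hab.le _).2,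
      projIcc_of_mem _ (hrescale_mem _ _ ⟨by linarith, by linarith⟩),
      projIcc_of_mem _ (hrescale_mem _ _ ⟨by linarith, by linarith⟩), Real.dist_eq,
      ← abs_of_pos hc_pos, ← abs_mul]
    simp only [rescale]
    ring_nf

theorem real_metric_diff_of_geodesic_target_general {X : Type*} [MetricSpace X]
    [MeasurableSpace X] [BorelSpace X]
    (μ : Measure X)
    {n : ℕ} (U : Set X) (φ : X → Euc n) (hchart : IsChart μ U φ)
    {ι : Type*} (Y : ι → Type*) [∀ i, MetricSpace (Y i)]
    (hgeod : ∃ (i₀ : ι) (a b : ℝ) (γ : ℝ → Y i₀), a < b ∧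
      ∀ s ∈ Set.Icc a b, ∀ t ∈ Set.Icc a b, dist (γ s) (γ t) = |s - t|)
    (hdiff : ∀ (i : ι) (f : X → Y i) (K : ℝ≥0), LipschitzOnWith K f U →
      HasMetricDiff μ U φ U f) :
    ∀ (f : X → ℝ) (K : ℝ≥0), LipschitzOnWith K f U → HasMetricDiff μ U φ U f := by
  obtain ⟨i₀, a, b, γ, hab, hγ⟩ := hgeod
  intro f K hf
  obtain ⟨F, hF, hfF⟩ := hf.extend_real
  obtain ⟨c, g, hc, hg_lip, hg_dist⟩ := exists_lipschitz_dist_eq_mul_near_floor hab hγ hF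
  refine HasMetricDiff.of_eventually_dist_eq_mul (hchart.1.inter hchart.1)
    (fun k => hdiff i₀ (g k) _ (hg_lip k).lipschitzOnWith) hF.continuous.measurable.floor
    (NNReal.coe_pos.mpr hc) fun x hx => ?_
  filter_upwards [nhdsWithin_le_nhds (hg_dist x), self_mem_nhdsWithin] with y hy hyU
  rw [hy, hfF hx.1, hfF hyU.1]

/-- **Lemma:** if the collection `(Y i)` contains a space with a non-trivial geodesic and
every Lipschitz map `U → Y i` admits a metric differential w.r.t. the chart `(U, φ)`, then
every real-valued Lipschitz function on `U` admits a metric differential w.r.t. `(U, φ)`. -/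
theorem real_metric_diff_of_geodesic_target {X : Type*} [MetricSpace X] [CompleteSpace X] [TopologicalSpace.SeparableSpace X]
    [MeasurableSpace X] [BorelSpace X]
    (μ : Measure X) (hμ : ∀ s : Set X, Bornology.IsBounded s → μ s ≠ ∞)
    {n : ℕ} (U : Set X) (φ : X → Euc n) (hchart : IsChart μ U φ)
    {ι : Type*} (Y : ι → Type*) [∀ i, MetricSpace (Y i)]
    (hgeod : ∃ (i₀ : ι) (a b : ℝ) (γ : ℝ → Y i₀), a < b ∧
      ∀ s ∈ Set.Icc a b, ∀ t ∈ Set.Icc a b, dist (γ s) (γ t) = |s - t|)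
    (hdiff : ∀ (i : ι) (f : X → Y i) (K : ℝ≥0), LipschitzOnWith K f U →
      HasMetricDiff μ U φ U f) :
    ∀ (f : X → ℝ) (K : ℝ≥0), LipschitzOnWith K f U → HasMetricDiff μ U φ U f :=
  real_metric_diff_of_geodesic_target_general μ U φ hchart Y hgeod hdiff

end
end

section
/- Let (X,d,μ) be a metric measure space, (U,φ) a weak Cheeger chart of dimension n on X, and V a separable Banach space. Then every Lipschitz map f : U → V* (V* the dual Banach space) is w*-differentiable with respect to (U,φ): for μ-a.e. x ∈ U there exists a unique linear map D_x f : ℝⁿ → V* such that for every v ∈ V, limsup_{U ∋ y → x} |⟨v, f(y) − f(x) − D_x f(φ(y) − φ(x))⟩| / d(y,x) = 0. -/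
open MeasureTheory Filter Set Metric
open scoped ENNReal NNReal Topology RealInnerProductSpace

noncomputable section

/-! At a point `x` where the zero function has only the zero differential (true a.e. on a weak
Cheeger chart), `M ↦ limsup_{y → x} |M (φ y - φ x)| / d(y, x)` is a continuous norm on the
finite-dimensional dual of `ℝⁿ`, hence dominates `c ‖M‖` for some `c > 0`. So the differential of
`y ↦ ⟨v, f y⟩` at `x` depends `K / c`-Lipschitzly on `v`. For a.e. `x`, Lipschitz extension and the
chart property give these differentials simultaneously for a dense sequence of `v`; they are
Cauchy, the differentiability relation is closed in `(v, M)`, so differentials exist for every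
`v`, and by uniqueness they are linear and bounded in `v`, i.e. they form `D : ℝⁿ → V*`. -/

section ChartDiff

variable {X E : Type*} [MetricSpace X] [NormedAddCommGroup E] [NormedSpace ℝ E]
  {l : Filter X} {φ : X → E} {x : X}

def IsChartDiff (l : Filter X) (φ : X → E) (g : X → ℝ) (x : X) (M : StrongDual ℝ E) : Prop :=
  Tendsto (fun y => |g y - g x - M (φ y - φ x)| / dist y x) l (𝓝 0)

theorem IsChartDiff.add {g h : X → ℝ} {M N : StrongDual ℝ E} (hg : IsChartDiff l φ g x M)
    (hh : IsChartDiff l φ h x N) : IsChartDiff l φ (g + h) x (M + N) := by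
  refine squeeze_zero (fun y => by positivity) (fun y => ?_)
    (by simpa only [add_zero] using Tendsto.add hg hh)
  rw [← add_div]
  gcongr
  calc |(g + h) y - (g + h) x - (M + N) (φ y - φ x)|
      = |(g y - g x - M (φ y - φ x)) + (h y - h x - N (φ y - φ x))| := by
        rw [Pi.add_apply, Pi.add_apply, add_apply]; congr 1; ring
    _ ≤ _ := abs_add_le _ _

theorem IsChartDiff.sub {g h : X → ℝ} {M N : StrongDual ℝ E} (hg : IsChartDiff l φ g x M)
    (hh : IsChartDiff l φ h x N) : IsChartDiff l φ (g - h) x (M - N) := by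
  refine squeeze_zero (fun y => by positivity) (fun y => ?_)
    (by simpa only [add_zero] using Tendsto.add hg hh)
  rw [← add_div]
  gcongr
  calc |(g - h) y - (g - h) x - (M - N) (φ y - φ x)|
      = |(g y - g x - M (φ y - φ x)) - (h y - h x - N (φ y - φ x))| := by
        rw [Pi.sub_apply, Pi.sub_apply, sub_apply]; congr 1; ring
    _ ≤ _ := abs_sub _ _

theorem IsChartDiff.const_smul {g : X → ℝ} {M : StrongDual ℝ E} (hg : IsChartDiff l φ g x M)
    (a : ℝ) : IsChartDiff l φ (a • g) x (a • M) := by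
  have h := Tendsto.const_mul |a| hg
  rw [mul_zero] at h
  refine h.congr fun y => ?_
  simp only [Pi.smul_apply, smul_apply, smul_eq_mul]
  rw [← mul_sub, ← mul_sub, abs_mul, mul_div_assoc]

theorem IsChartDiff.unique (hnd : ∀ M, IsChartDiff l φ 0 x M → M = 0) {g : X → ℝ}
    {M N : StrongDual ℝ E} (hM : IsChartDiff l φ g x M) (hN : IsChartDiff l φ g x N) : M = N :=
  sub_eq_zero.1 <| hnd _ <| by simpa only [sub_self] using hM.sub hN

def chartSlope (l : Filter X) (φ : X → E) (x : X) (M : StrongDual ℝ E) : ℝ :=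
  limsup (fun y => |M (φ y - φ x)| / dist y x) l

variable {Lφ : ℝ≥0}

theorem abs_apply_sub_div_dist_le (hφ : LipschitzWith Lφ φ) (M : StrongDual ℝ E) (y : X) :
    |M (φ y - φ x)| / dist y x ≤ ‖M‖ * Lφ :=
  div_le_of_le_mul₀ dist_nonneg (by positivity) <| calc
    |M (φ y - φ x)| ≤ ‖M‖ * ‖φ y - φ x‖ := M.le_opNorm _
    _ ≤ ‖M‖ * (Lφ * dist y x) := by gcongr; rw [← dist_eq_norm]; exact hφ.dist_le_mul y x
    _ = ‖M‖ * Lφ * dist y x := by ring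

theorem isBoundedUnder_abs_apply_sub_div_dist (hφ : LipschitzWith Lφ φ) (M : StrongDual ℝ E) :
    IsBoundedUnder (· ≤ ·) l fun y => |M (φ y - φ x)| / dist y x :=
  isBoundedUnder_of ⟨_, abs_apply_sub_div_dist_le hφ M⟩

theorem chartSlope_nonneg [l.NeBot] (hφ : LipschitzWith Lφ φ) (M : StrongDual ℝ E) :
    0 ≤ chartSlope l φ x M :=
  le_limsup_of_frequently_le (Frequently.of_forall fun y => by positivity)
    (isBoundedUnder_abs_apply_sub_div_dist hφ M)

theorem chartSlope_le_of_eventually_le [l.NeBot] {M : StrongDual ℝ E} {C : ℝ}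
    (h : ∀ᶠ y in l, |M (φ y - φ x)| / dist y x ≤ C) : chartSlope l φ x M ≤ C :=
  limsup_le_of_le (isCoboundedUnder_le_of_le l fun y => by positivity) h

theorem chartSlope_le_add [l.NeBot] (hφ : LipschitzWith Lφ φ) (M N : StrongDual ℝ E) :
    chartSlope l φ x M ≤ chartSlope l φ x N + ‖M - N‖ * Lφ := by
  rw [chartSlope, chartSlope, ← limsup_add_const _ _ _ (isBoundedUnder_abs_apply_sub_div_dist hφ N)
    (isCoboundedUnder_le_of_le l fun y => by positivity)]
  refine limsup_le_limsup (Eventually.of_forall fun y => ?_)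
    (isCoboundedUnder_le_of_le l fun y => by positivity)
    (isBoundedUnder_le_add (isBoundedUnder_abs_apply_sub_div_dist hφ N) isBoundedUnder_const)
  calc |M (φ y - φ x)| / dist y x
      ≤ |N (φ y - φ x)| / dist y x + |(M - N) (φ y - φ x)| / dist y x := by
        rw [← add_div]
        gcongr
        simpa using abs_add_le (N (φ y - φ x)) ((M - N) (φ y - φ x))
    _ ≤ |N (φ y - φ x)| / dist y x + ‖M - N‖ * Lφ := by
        gcongr; exact abs_apply_sub_div_dist_le hφ _ y

theorem lipschitzWith_chartSlope [l.NeBot] (hφ : LipschitzWith Lφ φ) :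
    LipschitzWith Lφ (chartSlope l φ x) :=
  LipschitzWith.of_le_add_mul Lφ fun M N => by
    simpa [dist_eq_norm, mul_comm] using chartSlope_le_add hφ M N

theorem isChartDiff_zero_of_chartSlope_eq_zero (hφ : LipschitzWith Lφ φ) {M : StrongDual ℝ E}
    (h : chartSlope l φ x M = 0) : IsChartDiff l φ 0 x M := by
  refine (tendsto_order.2 ⟨fun a ha => Eventually.of_forall fun y => ha.trans_le (by positivity),
    fun a ha => eventually_lt_of_limsup_lt (h ▸ ha)
      (isBoundedUnder_abs_apply_sub_div_dist hφ M)⟩).congr fun y => ?_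
  simp only [Pi.zero_apply, sub_self, zero_sub, abs_neg]

theorem exists_pos_mul_norm_le_of_eventually_le [FiniteDimensional ℝ E]
    (hφ : LipschitzWith Lφ φ) (hnd : ∀ M, IsChartDiff l φ 0 x M → M = 0) :
    ∃ c > 0, ∀ (M : StrongDual ℝ E) (C : ℝ), 0 ≤ C →
      (∀ᶠ y in l, |M (φ y - φ x)| / dist y x ≤ C) → c * ‖M‖ ≤ C := by
  rcases subsingleton_or_nontrivial (StrongDual ℝ E) with hE | hE
  · exact ⟨1, one_pos, fun M C hC _ => by simpa [Subsingleton.elim M 0] using hC⟩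
  have hl : l.NeBot := ⟨fun hl => by
    obtain ⟨M, hM⟩ := exists_ne (0 : StrongDual ℝ E)
    exact hM (hnd M (hl ▸ tendsto_bot))⟩
  have hcont := (lipschitzWith_chartSlope (l := l) (x := x) hφ).continuous
  obtain ⟨M₀, hM₀, hmin⟩ := (isCompact_sphere (0 : StrongDual ℝ E) 1).exists_isMinOn
    (NormedSpace.sphere_nonempty.2 zero_le_one) hcont.continuousOn
  have hpos : 0 < chartSlope l φ x M₀ := (chartSlope_nonneg hφ M₀).lt_of_ne' fun h =>
    ne_zero_of_mem_unit_sphere ⟨M₀, hM₀⟩ (hnd _ (isChartDiff_zero_of_chartSlope_eq_zero hφ h))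
  refine ⟨_, hpos, fun M C hC hMC => ?_⟩
  rcases eq_or_ne M 0 with rfl | hM
  · simpa using hC
  have hMpos : 0 < ‖M‖ := norm_pos_iff.2 hM
  have hunit : ‖M‖⁻¹ • M ∈ sphere (0 : StrongDual ℝ E) 1 := by
    simp [norm_smul, hMpos.ne']
  have hslope : chartSlope l φ x (‖M‖⁻¹ • M) ≤ ‖M‖⁻¹ * C :=
    chartSlope_le_of_eventually_le <| hMC.mono fun y hy => by
      rw [smul_apply, smul_eq_mul, abs_mul, abs_inv, abs_norm, mul_div_assoc]
      gcongr
  rw [mul_comm, ← le_inv_mul_iff₀ hMpos]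
  exact (hmin hunit).trans hslope

theorem IsChartDiff.mul_norm_le {g : X → ℝ} {M : StrongDual ℝ E} {c C : ℝ}
    (hc : ∀ (M : StrongDual ℝ E) (C : ℝ), 0 ≤ C →
      (∀ᶠ y in l, |M (φ y - φ x)| / dist y x ≤ C) → c * ‖M‖ ≤ C)
    (hg : IsChartDiff l φ g x M) (hC : 0 ≤ C) (hgC : ∀ᶠ y in l, |g y - g x| ≤ C * dist y x) :
    c * ‖M‖ ≤ C := by
  refine le_of_forall_pos_le_add fun ε hε => hc M _ (by positivity) ?_
  filter_upwards [hgC, Tendsto.eventually_le_const hε hg] with y hy hyε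
  calc |M (φ y - φ x)| / dist y x
      ≤ |g y - g x| / dist y x + |g y - g x - M (φ y - φ x)| / dist y x := by
        rw [← add_div]
        gcongr
        simpa using abs_sub (g y - g x) (g y - g x - M (φ y - φ x))
    _ ≤ C + ε := add_le_add (div_le_of_le_mul₀ dist_nonneg hC hy) hyε

end ChartDiff

theorem CauchySeq.of_dist_le_mul {α β : Type*} [PseudoMetricSpace α] [PseudoMetricSpace β]
    {s : ℕ → α} {t : ℕ → β} {C : ℝ} (hC : 0 ≤ C) (hs : CauchySeq s)
    (h : ∀ m n, dist (t m) (t n) ≤ C * dist (s m) (s n)) : CauchySeq t := by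
  obtain ⟨b, hb0, hb, hlim⟩ := cauchySeq_iff_le_tendsto_0.1 hs
  refine cauchySeq_iff_le_tendsto_0.2 ⟨fun N => C * b N, fun N => mul_nonneg hC (hb0 N),
    fun m n N hm hn => (h m n).trans (mul_le_mul_of_nonneg_left (hb m n N hm hn) hC), ?_⟩
  simpa using hlim.const_mul C

section WeakStarDiff

variable {X E V : Type*} [MetricSpace X] [NormedAddCommGroup E] [NormedSpace ℝ E]
  [NormedAddCommGroup V] [NormedSpace ℝ V] {l : Filter X} {φ : X → E} {x : X} {Lφ K : ℝ≥0}
  {f : X → StrongDual ℝ V} {v w : V} {M N : StrongDual ℝ E}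

theorem abs_apply_sub_apply_le {y : X} (hy : ‖f y - f x‖ ≤ K * dist y x) (v : V) :
    |f y v - f x v| ≤ K * ‖v‖ * dist y x :=
  calc |f y v - f x v| = ‖(f y - f x) v‖ := by rw [sub_apply, Real.norm_eq_abs]
    _ ≤ ‖f y - f x‖ * ‖v‖ := (f y - f x).le_opNorm v
    _ ≤ K * dist y x * ‖v‖ := by gcongr
    _ = K * ‖v‖ * dist y x := by ring

theorem IsChartDiff.apply_add (hv : IsChartDiff l φ (fun y => f y v) x M)
    (hw : IsChartDiff l φ (fun y => f y w) x N) :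
    IsChartDiff l φ (fun y => f y (v + w)) x (M + N) := by
  have h : (fun y => f y (v + w)) = (fun y => f y v) + fun y => f y w :=
    funext fun y => map_add (f y) v w
  exact h ▸ hv.add hw

theorem IsChartDiff.apply_sub (hv : IsChartDiff l φ (fun y => f y v) x M)
    (hw : IsChartDiff l φ (fun y => f y w) x N) :
    IsChartDiff l φ (fun y => f y (v - w)) x (M - N) := by
  have h : (fun y => f y (v - w)) = (fun y => f y v) - fun y => f y w :=
    funext fun y => map_sub (f y) v w
  exact h ▸ hv.sub hw

theorem IsChartDiff.apply_smul (hv : IsChartDiff l φ (fun y => f y v) x M) (a : ℝ) :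
    IsChartDiff l φ (fun y => f y (a • v)) x (a • M) := by
  have h : (fun y => f y (a • v)) = a • fun y => f y v :=
    funext fun y => map_smul (f y) a v
  exact h ▸ hv.const_smul a

theorem isClosed_setOf_isChartDiff_apply (hφ : LipschitzWith Lφ φ)
    (hf : ∀ᶠ y in l, ‖f y - f x‖ ≤ K * dist y x) :
    IsClosed {p : V × StrongDual ℝ E | IsChartDiff l φ (fun y => f y p.1) x p.2} := by
  refine isClosed_of_closure_subset fun ⟨v, M⟩ hvM => ?_
  refine tendsto_order.2 ⟨fun a ha => Eventually.of_forall fun y => ha.trans_le (by positivity),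
    fun ε hε => ?_⟩
  have hnear : ∀ᶠ p in 𝓝 (v, M), K * ‖v - p.1‖ + ‖M - p.2‖ * Lφ < ε / 2 :=
    Tendsto.eventually_lt_const (by simpa using half_pos hε)
      ((by fun_prop : Continuous fun p : V × StrongDual ℝ E =>
        K * ‖v - p.1‖ + ‖M - p.2‖ * Lφ).tendsto (v, M))
  obtain ⟨⟨w, N⟩, (hwN : K * ‖v - w‖ + ‖M - N‖ * Lφ < ε / 2), hdiff⟩ :=
    mem_closure_iff_nhds.1 hvM _ hnear
  filter_upwards [hf, Tendsto.eventually_lt_const (half_pos hε) hdiff] with y hy hyε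
  have hsplit : f y v - f x v - M (φ y - φ x) = (f y w - f x w - N (φ y - φ x))
      + (f y (v - w) - f x (v - w)) - (M - N) (φ y - φ x) := by
    simp only [map_sub, sub_apply]; ring
  calc |f y v - f x v - M (φ y - φ x)| / dist y x
      ≤ |f y w - f x w - N (φ y - φ x)| / dist y x + |f y (v - w) - f x (v - w)| / dist y x
        + |(M - N) (φ y - φ x)| / dist y x := by
        rw [← add_div, ← add_div, hsplit]
        gcongr
        exact (abs_sub _ _).trans (add_le_add_left (abs_add_le _ _) _)
    _ ≤ |f y w - f x w - N (φ y - φ x)| / dist y x + K * ‖v - w‖ + ‖M - N‖ * Lφ := by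
        gcongr
        · exact div_le_of_le_mul₀ dist_nonneg (by positivity) (abs_apply_sub_apply_le hy _)
        · exact abs_apply_sub_div_dist_le hφ _ y
    _ < ε := by linarith

variable [FiniteDimensional ℝ E]

theorem exists_isChartDiff_apply_of_dense (hφ : LipschitzWith Lφ φ)
    (hnd : ∀ M, IsChartDiff l φ 0 x M → M = 0) (hf : ∀ᶠ y in l, ‖f y - f x‖ ≤ K * dist y x)
    {S : Set V} (hS : Dense S) (hSdiff : ∀ v ∈ S, ∃ M, IsChartDiff l φ (fun y => f y v) x M)
    (v : V) : ∃ M, IsChartDiff l φ (fun y => f y v) x M := by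
  obtain ⟨c, hc, hcM⟩ := exists_pos_mul_norm_le_of_eventually_le hφ hnd
  obtain ⟨s, hsS, hsv⟩ := mem_closure_iff_seq_limit.1 (hS v)
  choose M hM using fun k => hSdiff (s k) (hsS k)
  have hM_cauchy : CauchySeq M :=
    hsv.cauchySeq.of_dist_le_mul (by positivity : 0 ≤ c⁻¹ * K) fun m n => by
      rw [dist_eq_norm, dist_eq_norm, mul_assoc, le_inv_mul_iff₀ hc]
      exact ((hM m).apply_sub (hM n)).mul_norm_le hcM (by positivity)
        (hf.mono fun y hy => abs_apply_sub_apply_le hy _)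
  obtain ⟨M', hM'⟩ := cauchySeq_tendsto_of_complete hM_cauchy
  exact ⟨M', ((isClosed_setOf_isChartDiff_apply hφ hf).mem_of_tendsto (hsv.prodMk_nhds hM')
    (Eventually.of_forall hM)).out⟩

theorem exists_continuousLinearMap_isChartDiff_apply (hφ : LipschitzWith Lφ φ)
    (hnd : ∀ M, IsChartDiff l φ 0 x M → M = 0) (hf : ∀ᶠ y in l, ‖f y - f x‖ ≤ K * dist y x)
    {S : Set V} (hS : Dense S) (hSdiff : ∀ v ∈ S, ∃ M, IsChartDiff l φ (fun y => f y v) x M) :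
    ∃ Λ : V →L[ℝ] StrongDual ℝ E, ∀ v, IsChartDiff l φ (fun y => f y v) x (Λ v) := by
  obtain ⟨c, hc, hcM⟩ := exists_pos_mul_norm_le_of_eventually_le hφ hnd
  choose Λ hΛ using exists_isChartDiff_apply_of_dense hφ hnd hf hS hSdiff
  let Λₗ : V →ₗ[ℝ] StrongDual ℝ E :=
    { toFun := Λ
      map_add' := fun v w => (hΛ (v + w)).unique hnd ((hΛ v).apply_add (hΛ w))
      map_smul' := fun a v => (hΛ (a • v)).unique hnd ((hΛ v).apply_smul a) }
  refine ⟨Λₗ.mkContinuous (c⁻¹ * K) fun v => ?_, hΛ⟩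
  rw [mul_assoc, le_inv_mul_iff₀ hc]
  exact (hΛ v).mul_norm_le hcM (by positivity) (hf.mono fun y hy => abs_apply_sub_apply_le hy v)

theorem existsUnique_weakStar_differential (hφ : LipschitzWith Lφ φ)
    (hnd : ∀ M, IsChartDiff l φ 0 x M → M = 0) (hf : ∀ᶠ y in l, ‖f y - f x‖ ≤ K * dist y x)
    {S : Set V} (hS : Dense S) (hSdiff : ∀ v ∈ S, ∃ M, IsChartDiff l φ (fun y => f y v) x M) :
    ∃! D : E →ₗ[ℝ] StrongDual ℝ V, ∀ v : V,
      Tendsto (fun y => |(f y - f x - D (φ y - φ x)) v| / dist y x) l (𝓝 0) := by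
  obtain ⟨Λ, hΛ⟩ := exists_continuousLinearMap_isChartDiff_apply hφ hnd hf hS hSdiff
  refine ⟨(Λ.flip : E →L[ℝ] StrongDual ℝ V), fun v => (hΛ v).congr fun y => by simp,
    fun D hD => ?_⟩
  ext e v
  let Dv : StrongDual ℝ E := LinearMap.toContinuousLinearMap
    ((ContinuousLinearMap.apply ℝ ℝ v).toLinearMap ∘ₗ D)
  have hDv : IsChartDiff l φ (fun y => f y v) x Dv := (hD v).congr fun y => by simp [Dv]
  simpa [Dv] using congr($(hDv.unique hnd (hΛ v)) e)

end WeakStarDiff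

theorem wstar_differentiability_general {X : Type*} [MetricSpace X]
    [MeasurableSpace X]
    (μ : Measure X)
    {n : ℕ} (U : Set X) (φ : X → Euc n) (hw : IsWeakCheegerChart μ U φ)
    {V : Type*} [NormedAddCommGroup V] [NormedSpace ℝ V]
    [TopologicalSpace.SeparableSpace V]
    (f : X → StrongDual ℝ V) (K : ℝ≥0) (hf : LipschitzOnWith K f U) :
    ∀ᵐ x ∂μ.restrict U, ∃! D : Euc n →ₗ[ℝ] StrongDual ℝ V,
      ∀ v : V, Tendsto (fun y => |(f y - f x - D (φ y - φ x)) v| / dist y x)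
        (𝓝[U \ {x}] x) (𝓝 0) := by
  obtain ⟨⟨hU, -, Lφ, hφ⟩, hdiff⟩ := hw
  choose g hg hgf using fun i => ((ContinuousLinearMap.apply ℝ ℝ
    (TopologicalSpace.denseSeq V i)).lipschitz.comp_lipschitzOnWith hf).extend_real
  filter_upwards [ae_restrict_mem hU, hdiff 0 0 (LipschitzWith.const 0),
    ae_all_iff.2 fun i => hdiff (g i) _ (hg i)] with x hxU h0 hgx
  have hU_near : ∀ᶠ y in 𝓝[U \ {x}] x, y ∈ U :=
    eventually_mem_nhdsWithin.mono fun y hy => hy.1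
  refine existsUnique_weakStar_differential hφ (fun M hM => ?_)
    (hU_near.mono fun y hy => dist_eq_norm (f y) (f x) ▸ hf.dist_le_mul y hy x hxU)
    (TopologicalSpace.denseRange_denseSeq V) ?_
  · exact_mod_cast h0.unique (y₁ := (M : Euc n →ₗ[ℝ] ℝ)) (y₂ := 0) hM
      (by simpa using tendsto_const_nhds)
  · rintro _ ⟨i, rfl⟩
    obtain ⟨L, hL, -⟩ := hgx i
    exact ⟨LinearMap.toContinuousLinearMap L, hL.congr' <| hU_near.mono fun y hy => by
      simp [← hgf i hy, ← hgf i hxU]⟩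

/-- **Proposition:** if `(U, φ)` is a weak Cheeger chart and `V` is a separable Banach
space, then every Lipschitz map `f : U → V*` admits a unique `w*`-differential with respect
to `(U, φ)` at `μ`-a.e. point of `U`. -/
theorem wstar_differentiability {X : Type*} [MetricSpace X] [CompleteSpace X] [TopologicalSpace.SeparableSpace X]
    [MeasurableSpace X] [BorelSpace X]
    (μ : Measure X) (hμ : ∀ s : Set X, Bornology.IsBounded s → μ s ≠ ∞)
    {n : ℕ} (U : Set X) (φ : X → Euc n) (hw : IsWeakCheegerChart μ U φ)
    {V : Type*} [NormedAddCommGroup V] [NormedSpace ℝ V] [CompleteSpace V]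
    [TopologicalSpace.SeparableSpace V]
    (f : X → StrongDual ℝ V) (K : ℝ≥0) (hf : LipschitzOnWith K f U) :
    ∀ᵐ x ∂μ.restrict U, ∃! D : Euc n →ₗ[ℝ] StrongDual ℝ V,
      ∀ v : V, Tendsto (fun y => |(f y - f x - D (φ y - φ x)) v| / dist y x)
        (𝓝[U \ {x}] x) (𝓝 0) :=
  wstar_differentiability_general μ U φ hw f K hf
end
end

section
/- Let (X,d,μ) be a metric measure space, (U,φ) an n-dimensional chart on X, Y a metric space, and f : U → Y an L-bi-Lipschitz map admitting a metric differential with respect to (U,φ). Then there is a countable decomposition U = Z ∪ ⋃_i V_i into pairwise disjoint sets, where μ(Z) = 0 and each V_i is Borel with φ|_{V_i} bi-Lipschitz. -/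
open MeasureTheory Filter Set Metric
open scoped ENNReal NNReal Topology RealInnerProductSpace

noncomputable section

/-!
At a point `x ∈ U` where the metric differential exists, `d(f y, f x)` agrees with
`md x (φ y - φ x)` up to `d(y, x) / (2L)` for all `y ∈ U` close enough to `x`. Since
`d(f y, f x) ≥ d(y, x) / L` and `md x v ≤ C x * ‖v‖` with `C x = ∑ i, md x eᵢ`, this gives
`d(y, x) ≤ 2 L (C x) ‖φ y - φ x‖`. Sorting the points of `U` by the scale `1 / (m + 1)` at which the
approximation holds and by an integer bound `k ≥ C x`, and cutting into balls of radius half that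
scale, covers almost all of `U` by countably many pieces on which `φ` is bi-Lipschitz. The pieces
are Borel because, by continuity in `y`, the approximation condition only needs to be checked for
`y` in a countable dense subset of `U`. Disjointifying the pieces gives the decomposition.
-/

namespace IsSeminormFn

variable {n : ℕ} {p : Euc n → ℝ}

lemma le_sum_mul_norm (hp : IsSeminormFn p) (v : Euc n) :
    p v ≤ (∑ i, p (EuclideanSpace.single i 1)) * ‖v‖ := by
  obtain ⟨s, hs⟩ := hp
  simp only [hs]
  calc s v = s (∑ i, v i • EuclideanSpace.single i (1 : ℝ)) := by
        congr 1
        simpa [EuclideanSpace.basisFun_apply] using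
          ((EuclideanSpace.basisFun (Fin n) ℝ).toBasis.sum_repr v).symm
    _ ≤ ∑ i, s (v i • EuclideanSpace.single i (1 : ℝ)) :=
        Finset.le_sum_of_subadditive s (map_zero s).le (map_add_le_add s) _ _
    _ ≤ ∑ i, s (EuclideanSpace.single i 1) * ‖v‖ := by
        gcongr with i
        rw [map_smul_eq_mul, mul_comm, Real.norm_eq_abs]
        gcongr
        simpa using PiLp.norm_apply_le v i
    _ = _ := (Finset.sum_mul _ _ _).symm

lemma continuous (hp : IsSeminormFn p) : Continuous p := by
  obtain ⟨s, hs⟩ := hp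
  rw [show p = s from funext hs, ← continuousOn_univ]
  simpa using s.convexOn.continuousOn_interior

end IsSeminormFn

lemma BiLipschitzOn.mono {X Y : Type*} [MetricSpace X] [MetricSpace Y] {L : ℝ} {f : X → Y}
    {s t : Set X} (h : BiLipschitzOn L f s) (hts : t ⊆ s) : BiLipschitzOn L f t :=
  fun x hx y hy => h x (hts hx) y (hts hy)

lemma BiLipschitzOn.continuousOn {X Y : Type*} [MetricSpace X] [MetricSpace Y] {L : ℝ}
    {f : X → Y} {s : Set X} (h : BiLipschitzOn L f s) : ContinuousOn f s :=
  (LipschitzOnWith.of_dist_le' fun x hx y hy => (h x hx y hy).2).continuousOn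

section MetricDifferential

variable {X Y : Type*} [MetricSpace X] [MetricSpace Y] {n : ℕ}
  {f : X → Y} {φ : X → Euc n} {md : X → Euc n → ℝ} {U : Set X} {c r : ℝ}

def mdApproxSet (f : X → Y) (φ : X → Euc n) (md : X → Euc n → ℝ) (U : Set X) (c r : ℝ) :
    Set X :=
  {x ∈ U | ∀ y ∈ U, dist y x < r → |dist (f y) (f x) - md x (φ y - φ x)| ≤ c * dist y x}

lemma mem_mdApproxSet_of_dense {D : Set U} (hD : Dense D) (hf : ContinuousOn f U)
    (hφ : Continuous φ) {x : X} (hx : x ∈ U) (hmd : Continuous (md x))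
    (h : ∀ d ∈ D, dist (d : X) x < r →
      |dist (f d) (f x) - md x (φ d - φ x)| ≤ c * dist (d : X) x) :
    x ∈ mdApproxSet f φ md U c r := by
  refine ⟨hx, fun y hy => ?_⟩
  have hfU : Continuous fun z : U => f z := hf.domRestrict
  have hclosed : IsClosed {z : U | dist (z : X) x < r →
      |dist (f z) (f x) - md x (φ z - φ x)| ≤ c * dist (z : X) x} := by
    have hmdU : Continuous fun z : U => md x (φ z - φ x) :=
      hmd.comp ((hφ.comp continuous_subtype_val).sub continuous_const)
    simp only [imp_iff_not_or, not_lt, ofPred_or]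
    exact (isClosed_le continuous_const (by fun_prop)).union
      (isClosed_le ((continuous_dist.comp₂ hfU continuous_const).sub hmdU).abs (by fun_prop))
  exact hclosed.closure_subset_iff.2 h (hD.closure_eq ▸ mem_univ (⟨y, hy⟩ : U))

lemma measurableSet_mdApproxSet [MeasurableSpace X] [BorelSpace X]
    [TopologicalSpace.SeparableSpace X] (hU : MeasurableSet U) (hf : ContinuousOn f U)
    (hφ : Continuous φ) (hmeas : ∀ v, Measurable fun x => md x v)
    (hsemi : ∀ x ∈ U, IsSeminormFn (md x)) : MeasurableSet (mdApproxSet f φ md U c r) := by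
  obtain ⟨D, hDc, hDd⟩ := TopologicalSpace.exists_countable_dense U
  have hpre : ((↑) : U → X) ⁻¹' mdApproxSet f φ md U c r = ⋂ d ∈ D, {x : U |
      dist (d : X) x < r → |dist (f d) (f x) - md x (φ d - φ x)| ≤ c * dist (d : X) x} := by
    ext x
    simp only [mem_preimage, mem_iInter, mem_ofPred_eq]
    exact ⟨fun hx d _ => hx.2 d d.2,
      mem_mdApproxSet_of_dense hDd hf hφ x.2 (hsemi x x.2).continuous⟩
  have hmdU : Measurable fun p : Euc n × U => md p.2 p.1 :=
    measurable_uncurry_of_continuous_of_measurable (u := fun v (x : U) => md x v)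
      (fun x => (hsemi x x.2).continuous) fun v => (hmeas v).comp measurable_subtype_coe
  have hfU : Continuous fun z : U => f z := hf.domRestrict
  rw [← inter_eq_right.2 fun x (hx : x ∈ mdApproxSet f φ md U c r) => hx.1,
    ← Subtype.image_preimage_coe, hpre]
  refine hU.subtype_image (.biInter hDc fun d _ => measurableSet_setOfPred.2 (.imp ?_ ?_))
  · exact measurableSet_setOfPred.1 (measurableSet_lt (by fun_prop) measurable_const)
  · refine measurableSet_setOfPred.1 (measurableSet_le ?_ (by fun_prop))
    exact ((continuous_const.dist hfU).measurable.sub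
      (hmdU.comp ((measurable_const.sub (hφ.measurable.comp measurable_subtype_coe)).prodMk
        measurable_id))).abs

lemma exists_mem_mdApproxSet {x : X} (hx : x ∈ U) (hmd : md x 0 = 0) (hc : 0 < c)
    (htend : Tendsto (fun y => |dist (f y) (f x) - md x (φ y - φ x)| / dist y x)
      (𝓝[U \ {x}] x) (𝓝 0)) :
    ∃ m : ℕ, x ∈ mdApproxSet f φ md U c (1 / (m + 1)) := by
  obtain ⟨ε, hε, hball⟩ := Metric.mem_nhdsWithin_iff.1 (htend (Iio_mem_nhds hc))
  obtain ⟨m, hm⟩ := exists_nat_one_div_lt hε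
  refine ⟨m, hx, fun y hy hyx => ?_⟩
  rcases eq_or_ne y x with rfl | hne
  · simp [hmd]
  · have hlt := hball ⟨mem_ball.2 (hyx.trans hm), hy, hne⟩
    exact ((div_lt_iff₀ (dist_pos.2 hne)).1 hlt).le

variable {L : ℝ} {x z : X}

lemma dist_le_of_mem_mdApproxSet (hL : 0 < L) (hbil : BiLipschitzOn L f U)
    (hx : x ∈ mdApproxSet f φ md U (2 * L)⁻¹ r) {C : ℝ} (hC : ∀ v, md x v ≤ C * ‖v‖)
    (hz : z ∈ U) (hzx : dist z x < r) : dist z x ≤ 2 * L * (C * dist (φ z) (φ x)) := by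
  have hf := (hbil z hz x hx.1).1
  have happrox := (abs_le.1 (hx.2 z hz hzx)).2
  have hmd : md x (φ z - φ x) ≤ C * dist (φ z) (φ x) := dist_eq_norm (φ z) (φ x) ▸ hC _
  rw [mul_inv] at happrox
  refine (inv_mul_le_iff₀ (by positivity)).1 ?_
  rw [mul_inv]
  linarith

lemma biLipschitzOn_mdApproxSet_inter_ball (hL : 0 < L) (hbil : BiLipschitzOn L f U)
    {K : ℝ≥0} (hK : LipschitzWith K φ) (hsemi : ∀ x ∈ U, IsSeminormFn (md x)) (k : ℕ) (u : X) :
    BiLipschitzOn (2 * L * k + K + 1) φ (mdApproxSet f φ md U (2 * L)⁻¹ r ∩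
      {x | ∑ i, md x (EuclideanSpace.single i 1) ≤ k} ∩ ball u (r / 2)) := by
  rintro x ⟨⟨hx, hxk⟩, hxu⟩ z ⟨⟨hz, -⟩, hzu⟩
  have hL' : 0 < 2 * L * k + K + 1 := by positivity
  refine ⟨?_, (hK.dist_le_mul x z).trans (by gcongr; linarith [show 0 ≤ 2 * L * k by positivity])⟩
  have hzx : dist z x < r := by linarith [dist_triangle_right z x u, mem_ball.1 hxu, mem_ball.1 hzu]
  have hC : ∀ v, md x v ≤ k * ‖v‖ := fun v =>
    ((hsemi x hx.1).le_sum_mul_norm v).trans (by gcongr; exact hxk)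
  rw [inv_mul_le_iff₀ hL', dist_comm x, dist_comm (φ x)]
  calc dist z x ≤ 2 * L * (k * dist (φ z) (φ x)) :=
        dist_le_of_mem_mdApproxSet hL hbil hx hC hz.1 hzx
    _ ≤ (2 * L * k + K + 1) * dist (φ z) (φ x) := by
        nlinarith [dist_nonneg (x := φ z) (y := φ x), K.2]

end MetricDifferential

lemma exists_null_union_disjointed {α : Type*} [MeasurableSpace α] {μ : Measure α}
    {U : Set α} {W : ℕ → Set α} (hWU : ∀ i, W i ⊆ U) (hW : ∀ i, MeasurableSet (W i))
    (hnull : μ (U \ ⋃ i, W i) = 0) :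
    ∃ (Z : Set α) (V : ℕ → Set α), U = Z ∪ ⋃ i, V i ∧ μ Z = 0 ∧
      Pairwise (Function.onFun Disjoint V) ∧ (∀ i, Disjoint Z (V i)) ∧
      (∀ i, MeasurableSet (V i)) ∧ ∀ i, V i ⊆ W i := by
  refine ⟨U \ ⋃ i, W i, disjointed W, ?_, hnull, disjoint_disjointed W, fun i => ?_,
    MeasurableSet.disjointed hW, disjointed_subset W⟩
  · rw [iUnion_disjointed, sdiff_union_self, union_eq_left.2 (iUnion_subset hWU)]
  · exact disjoint_sdiff_left.mono_right ((disjointed_subset W i).trans (subset_iUnion W i))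

lemma exists_biLipschitzOn_cover {X : Type*} [MetricSpace X]
    [TopologicalSpace.SeparableSpace X] [MeasurableSpace X] [BorelSpace X]
    {μ : Measure X} {n : ℕ} {U : Set X} {φ : X → Euc n} (hchart : IsChart μ U φ)
    {Y : Type*} [MetricSpace Y] {f : X → Y} {L : ℝ} (hL : 0 < L)
    (hbil : BiLipschitzOn L f U) (hdiff : HasMetricDiff μ U φ U f) :
    ∃ W : ℕ → Set X, (∀ i, W i ⊆ U) ∧ (∀ i, MeasurableSet (W i)) ∧
      μ (U \ ⋃ i, W i) = 0 ∧ ∀ i, ∃ L' : ℝ, 0 < L' ∧ BiLipschitzOn L' φ (W i) := by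
  obtain ⟨hU, hUpos, K, hK⟩ := hchart
  have : Nonempty X := ⟨(nonempty_of_measure_ne_zero hUpos.ne').some⟩
  obtain ⟨md, hsemi, hmeas, hae⟩ := hdiff
  rw [inter_self] at hsemi hae
  let piece : ℕ × ℕ × ℕ → Set X := fun ⟨k, m, j⟩ =>
    mdApproxSet f φ md U (2 * L)⁻¹ (1 / (m + 1)) ∩
      {x | ∑ i, md x (EuclideanSpace.single i 1) ≤ k} ∩
      ball (TopologicalSpace.denseSeq X j) (1 / (m + 1) / 2)
  refine ⟨fun i => piece (Denumerable.ofNat _ i), fun i x hx => hx.1.1.1, fun i => ?_, ?_,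
    fun i => ⟨_, by positivity, biLipschitzOn_mdApproxSet_inter_ball hL hbil hK hsemi _ _⟩⟩
  · refine ((measurableSet_mdApproxSet hU hbil.continuousOn hK.continuous hmeas hsemi).inter
      (measurableSet_le (Finset.measurable_sum _ fun i _ => hmeas _) measurable_const)).inter
      measurableSet_ball
  · have hcover : ∀ᵐ x ∂μ.restrict U, x ∈ ⋃ i, piece (Denumerable.ofNat _ i) := by
      filter_upwards [hae, ae_restrict_mem hU] with x htend hx
      obtain ⟨s, hs⟩ := hsemi x hx
      obtain ⟨m, hm⟩ :=
        exists_mem_mdApproxSet (c := (2 * L)⁻¹) hx (by simp [hs]) (by positivity) htend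
      obtain ⟨j, hj⟩ := (TopologicalSpace.denseRange_denseSeq X).exists_dist_lt x
        (by positivity : (0 : ℝ) < 1 / (m + 1) / 2)
      refine mem_iUnion.2 ⟨Encodable.encode (⌈∑ i, md x (EuclideanSpace.single i 1)⌉₊, m, j), ?_⟩
      rw [Denumerable.ofNat_encode]
      exact ⟨⟨hm, Nat.le_ceil (R := ℝ) _⟩, mem_ball.2 hj⟩
    rw [ae_iff, Measure.restrict_apply' hU] at hcover
    rwa [sdiff_eq_compl_inter]

theorem biLipschitz_decomposition_general {X : Type*} [MetricSpace X] [TopologicalSpace.SeparableSpace X]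
    [MeasurableSpace X] [BorelSpace X]
    (μ : Measure X)
    {n : ℕ} (U : Set X) (φ : X → Euc n) (hchart : IsChart μ U φ)
    {Y : Type*} [MetricSpace Y] (f : X → Y) (L : ℝ) (hL : 0 < L)
    (hbil : BiLipschitzOn L f U) (hdiff : HasMetricDiff μ U φ U f) :
    ∃ (Z : Set X) (V : ℕ → Set X), U = Z ∪ ⋃ i, V i ∧ μ Z = 0 ∧
      Pairwise (Function.onFun Disjoint V) ∧ (∀ i, Disjoint Z (V i)) ∧
      (∀ i, MeasurableSet (V i)) ∧
      ∀ i, ∃ L' : ℝ, 0 < L' ∧ BiLipschitzOn L' φ (V i) := by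
  obtain ⟨W, hWU, hW, hnull, hWbil⟩ := exists_biLipschitzOn_cover hchart hL hbil hdiff
  obtain ⟨Z, V, hUZV, hZ, hdisj, hZV, hV, hVW⟩ := exists_null_union_disjointed hWU hW hnull
  refine ⟨Z, V, hUZV, hZ, hdisj, hZV, hV, fun i => ?_⟩
  obtain ⟨L', hL', hbilW⟩ := hWbil i
  exact ⟨L', hL', hbilW.mono (hVW i)⟩

/-- **Lemma (bi-Lipschitz decomposition):** if `f : U → Y` is an `L`-bi-Lipschitz map
admitting a metric differential with respect to the chart `(U, φ)`, then `U = Z ∪ ⋃ i, V i`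
with `μ Z = 0`, the pieces pairwise disjoint, each `V i` Borel and `φ|_{V i}` bi-Lipschitz. -/
theorem biLipschitz_decomposition {X : Type*} [MetricSpace X] [CompleteSpace X] [TopologicalSpace.SeparableSpace X]
    [MeasurableSpace X] [BorelSpace X]
    (μ : Measure X) (hμ : ∀ s : Set X, Bornology.IsBounded s → μ s ≠ ∞)
    {n : ℕ} (U : Set X) (φ : X → Euc n) (hchart : IsChart μ U φ)
    {Y : Type*} [MetricSpace Y] (f : X → Y) (L : ℝ) (hL : 0 < L)
    (hbil : BiLipschitzOn L f U) (hdiff : HasMetricDiff μ U φ U f) :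
    ∃ (Z : Set X) (V : ℕ → Set X), U = Z ∪ ⋃ i, V i ∧ μ Z = 0 ∧
      Pairwise (Function.onFun Disjoint V) ∧ (∀ i, Disjoint Z (V i)) ∧
      (∀ i, MeasurableSet (V i)) ∧
      ∀ i, ∃ L' : ℝ, 0 < L' ∧ BiLipschitzOn L' φ (V i) :=
  biLipschitz_decomposition_general μ U φ hchart f L hL hbil hdiff

end
end

section
/- Let L ⊂ ℝⁿ be a set spanning ℝⁿ and ℓ : L → ℝ a function. Suppose that for every w ∈ ℚⁿ there exists a seminorm s_w on ℝⁿ such that s_w(v) = |ℓ(v) + w·v| for all v ∈ L. Then: (a) ℓ(t v) = t ℓ(v) whenever v and t v both lie in L (t ∈ ℝ); (b) ℓ(v + v') = ℓ(v) + ℓ(v') whenever v, v', v + v' all lie in L; and consequently there exists a linear map Λ : ℝⁿ → ℝ with Λ|_L = ℓ. -/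
open MeasureTheory Filter Set Metric
open scoped ENNReal NNReal Topology RealInnerProductSpace

noncomputable section

/-!
Pick a basis `b` of `ℝⁿ` inside `L`. For rational `w`, the seminorm `s_w` bounds
`|ℓ v + w·v| = s_w v` by `∑ |vᵢ| s_w (bᵢ) = ∑ |vᵢ| |ℓ bᵢ + w·bᵢ|`, where `vᵢ` are the
coordinates of `v` in `b`. Both sides are continuous in `w`, so by density the bound holds for
every real `w`; taking `w` with `w·bᵢ = -ℓ bᵢ` makes the right side vanish, so `ℓ` agrees on `L`
with the linear map `v ↦ -w·v`.
-/

open Module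

lemma Seminorm.le_sum_abs_repr_mul {E ι : Type*} [AddCommGroup E] [Module ℝ E] [Fintype ι]
    (s : Seminorm ℝ E) (b : Basis ι ℝ E) (v : E) :
    s v ≤ ∑ i, |b.repr v i| * s (b i) :=
  calc s v = s (∑ i, b.repr v i • b i) := by rw [b.sum_repr]
    _ ≤ ∑ i, s (b.repr v i • b i) :=
      Finset.le_sum_of_subadditive s (map_zero s).le (map_add_le_add s) _ _
    _ = ∑ i, |b.repr v i| * s (b i) := by simp only [map_smul_eq_mul, Real.norm_eq_abs]

lemma denseRange_ratCast_euclideanSpace (n : ℕ) :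
    DenseRange fun w : Fin n → ℚ => (WithLp.equiv 2 (Fin n → ℝ)).symm fun i => (w i : ℝ) :=
  (WithLp.equiv 2 (Fin n → ℝ)).symm.surjective.denseRange.comp
    (DenseRange.piMap fun _ => Rat.denseRange_cast) (PiLp.continuous_toLp 2 _)

lemma abs_add_inner_le_sum_abs_repr_mul {n : ℕ} {ι : Type*} [Fintype ι]
    {L : Set (Euc n)} {ℓ : Euc n → ℝ} (b : Basis ι ℝ (Euc n)) (hbL : range b ⊆ L)
    (hsem : ∀ w : Fin n → ℚ, ∃ s : Seminorm ℝ (Euc n),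
      ∀ v ∈ L, s v = |ℓ v + (inner ℝ ((WithLp.equiv 2 (Fin n → ℝ)).symm fun i => (w i : ℝ)) v : ℝ)|)
    {v : Euc n} (hv : v ∈ L) (w : Euc n) :
    |ℓ v + ⟪w, v⟫| ≤ ∑ i, |b.repr v i| * |ℓ (b i) + ⟪w, b i⟫| := by
  refine (denseRange_ratCast_euclideanSpace n).induction_on w
    (isClosed_le (by fun_prop) (by fun_prop)) fun q => ?_
  obtain ⟨s, hs⟩ := hsem q
  rw [← hs v hv]
  simp_rw [← hs _ (hbL (mem_range_self _))]
  exact s.le_sum_abs_repr_mul b v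

theorem exists_linearMap_eqOn_of_seminorm_compatible {n : ℕ}
    (L : Set (Euc n)) (hspan : Submodule.span ℝ L = ⊤) (ℓ : Euc n → ℝ)
    (hsem : ∀ w : Fin n → ℚ, ∃ s : Seminorm ℝ (Euc n),
      ∀ v ∈ L, s v = |ℓ v + (inner ℝ ((WithLp.equiv 2 (Fin n → ℝ)).symm fun i => (w i : ℝ)) v : ℝ)|) :
    ∃ Λ : Euc n →ₗ[ℝ] ℝ, ∀ v ∈ L, Λ v = ℓ v := by
  let b := Basis.ofSpan hspan.ge
  have : Fintype _ := FiniteDimensional.fintypeBasisIndex b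
  let Λ := b.constr ℝ (ℓ ∘ b)
  let w₀ := (InnerProductSpace.toDual ℝ (Euc n)).symm (-LinearMap.toContinuousLinearMap Λ)
  have hw₀ (v : Euc n) : ⟪w₀, v⟫ = -Λ v := InnerProductSpace.toDual_symm_apply
  refine ⟨Λ, fun v hv => ?_⟩
  have h := abs_add_inner_le_sum_abs_repr_mul b (Basis.ofSpan_subset _) hsem hv w₀
  simp only [hw₀, Λ, b.constr_basis, Function.comp_apply, add_neg_cancel, abs_zero, mul_zero,
    Finset.sum_const_zero, abs_nonpos_iff, add_neg_eq_zero] at h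
  exact h.symm

/-- **Lemma (linear algebra core of Proposition 3.1):** if `ℓ : L → ℝ` is a function on a
spanning set `L ⊆ ℝⁿ` such that for every rational vector `w` the map `v ↦ |ℓ(v) + w·v|`
is the restriction to `L` of a seminorm, then `ℓ` is homogeneous and additive on `L` and
extends to a linear map `ℝⁿ → ℝ`. -/
theorem linear_extension_of_seminorm_compatible {n : ℕ}
    (L : Set (Euc n)) (hspan : Submodule.span ℝ L = ⊤) (ℓ : Euc n → ℝ)
    (hsem : ∀ w : Fin n → ℚ, ∃ s : Seminorm ℝ (Euc n),
      ∀ v ∈ L, s v = |ℓ v + (inner ℝ ((WithLp.equiv 2 (Fin n → ℝ)).symm fun i => (w i : ℝ)) v : ℝ)|) :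
    (∀ (t : ℝ) (v : Euc n), v ∈ L → t • v ∈ L → ℓ (t • v) = t * ℓ v) ∧
    (∀ v v' : Euc n, v ∈ L → v' ∈ L → v + v' ∈ L → ℓ (v + v') = ℓ v + ℓ v') ∧
    ∃ Λ : Euc n →ₗ[ℝ] ℝ, ∀ v ∈ L, Λ v = ℓ v := by
  obtain ⟨Λ, hΛ⟩ := exists_linearMap_eqOn_of_seminorm_compatible L hspan ℓ hsem
  refine ⟨fun t v hv htv => ?_, fun v v' hv hv' hvv' => ?_, Λ, hΛ⟩
  · rw [← hΛ v hv, ← hΛ _ htv, map_smul, smul_eq_mul]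
  · rw [← hΛ v hv, ← hΛ v' hv', ← hΛ _ hvv', map_add]

end
end

section
/- Let (X,d,μ) be a metric measure space and (U,φ) a weak Cheeger chart of dimension n on X. Then for μ-a.e. x ∈ U, the map λ ↦ Lip((λ∘φ)|_U)(x) is a norm on the dual space (ℝⁿ)*; in particular it is positive on every nonzero λ ∈ (ℝⁿ)*. -/
open MeasureTheory Filter Set Metric
open scoped ENNReal NNReal Topology RealInnerProductSpace

noncomputable section

/-
Nonnegativity, homogeneity and subadditivity hold at every point: they hold for the difference
quotients and pass to the `limsup`. Definiteness comes from the uniqueness of the differential of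
the constant function `0`: at a.e. `x ∈ U` no `λ ≠ 0` can have `|λ (φ y - φ x)| / d(y, x) → 0` as
`U ∋ y → x`, and `Lip((λ ∘ φ)|_U)(x) = 0` says exactly that.
-/

-- `limsup` in `ℝ` along `⊥` is the junk value `sInf univ = 0`.
lemma Real.limsup_bot {α : Type*} (u : α → ℝ) : limsup u ⊥ = 0 := by
  simp [limsup_eq]

lemma Real.limsup_const_mul_of_nonneg {α : Type*} {F : Filter α} {u : α → ℝ} {c : ℝ}
    (hc : 0 ≤ c) (hle : F.IsBoundedUnder (· ≤ ·) u) (hge : F.IsBoundedUnder (· ≥ ·) u) :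
    limsup (fun y => c * u y) F = c * limsup u F := by
  rcases F.eq_or_neBot with rfl | hF
  · simp only [Real.limsup_bot, mul_zero]
  rcases hc.eq_or_lt with rfl | hc
  · simp only [zero_mul, limsup_const]
  have hle' : F.IsBoundedUnder (· ≤ ·) fun y => c * u y := by
    obtain ⟨C, hC⟩ := hle
    exact ⟨c * C, by simpa using hC.mono fun y hy => mul_le_mul_of_nonneg_left hy hc.le⟩
  have hge' : F.IsBoundedUnder (· ≥ ·) fun y => c * u y := by
    obtain ⟨C, hC⟩ := hge
    exact ⟨c * C, by simpa using hC.mono fun y hy => mul_le_mul_of_nonneg_left hy hc.le⟩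
  exact ((OrderIso.mulLeft₀ c hc).limsup_apply hle hge.isCoboundedUnder_le hle'
    hge'.isCoboundedUnder_le).symm

section lipWithin

variable {X Y : Type*} [MetricSpace X] [MetricSpace Y] {s : Set X} {x : X}

lemma LipschitzWith.dist_div_dist_le {K : ℝ≥0} {g : X → Y} (hg : LipschitzWith K g) (x y : X) :
    dist (g y) (g x) / dist y x ≤ K := by
  rcases eq_or_ne y x with rfl | hyx
  · simp
  · rw [div_le_iff₀ (dist_pos.2 hyx)]
    exact hg.dist_le_mul y x

lemma LipschitzWith.isBoundedUnder_dist_div_dist {K : ℝ≥0} {g : X → Y} (hg : LipschitzWith K g)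
    (x : X) (F : Filter X) :
    F.IsBoundedUnder (· ≤ ·) (fun y => dist (g y) (g x) / dist y x) ∧
      F.IsBoundedUnder (· ≥ ·) (fun y => dist (g y) (g x) / dist y x) :=
  ⟨isBoundedUnder_of ⟨K, hg.dist_div_dist_le x⟩,
    isBoundedUnder_of ⟨0, fun _ => div_nonneg dist_nonneg dist_nonneg⟩⟩

lemma lipWithin_eq_zero_of_eq_bot {g : X → Y} (h : 𝓝[s \ {x}] x = ⊥) : lipWithin g s x = 0 := by
  rw [lipWithin, h, Real.limsup_bot]

lemma lipWithin_nonneg (g : X → Y) (s : Set X) (x : X) : 0 ≤ lipWithin g s x := by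
  rcases (𝓝[s \ {x}] x).eq_or_neBot with h | hF
  · exact (lipWithin_eq_zero_of_eq_bot h).ge
  refine Real.sInf_nonneg fun a ha => ?_
  obtain ⟨_, hy⟩ := (show ∀ᶠ y in 𝓝[s \ {x}] x, dist (g y) (g x) / dist y x ≤ a from ha).exists
  exact (div_nonneg dist_nonneg dist_nonneg).trans hy

lemma lipWithin_const_mul {K : ℝ≥0} {g : X → ℝ} (hg : LipschitzWith K g) (c : ℝ) :
    lipWithin (fun y => c * g y) s x = |c| * lipWithin g s x := by
  have hslope : (fun y => dist (c * g y) (c * g x) / dist y x) =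
      fun y => |c| * (dist (g y) (g x) / dist y x) := by
    funext y
    rw [Real.dist_eq, Real.dist_eq, ← mul_sub, abs_mul, mul_div_assoc]
  obtain ⟨hle, hge⟩ := hg.isBoundedUnder_dist_div_dist x (𝓝[s \ {x}] x)
  rw [lipWithin, hslope, Real.limsup_const_mul_of_nonneg (abs_nonneg c) hle hge, lipWithin]

lemma lipWithin_add_le {Kf Kg : ℝ≥0} {f g : X → ℝ} (hf : LipschitzWith Kf f)
    (hg : LipschitzWith Kg g) :
    lipWithin (fun y => f y + g y) s x ≤ lipWithin f s x + lipWithin g s x := by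
  rcases (𝓝[s \ {x}] x).eq_or_neBot with h | hF
  · simp only [lipWithin_eq_zero_of_eq_bot h, add_zero, le_refl]
  obtain ⟨hfle, hfge⟩ := hf.isBoundedUnder_dist_div_dist x (𝓝[s \ {x}] x)
  obtain ⟨hgle, hgge⟩ := hg.isBoundedUnder_dist_div_dist x (𝓝[s \ {x}] x)
  have hslope : ∀ y, dist (f y + g y) (f x + g x) / dist y x ≤
      dist (f y) (f x) / dist y x + dist (g y) (g x) / dist y x := fun y => by
    rw [← add_div]
    gcongr
    exact dist_add_add_le _ _ _ _
  calc lipWithin (fun y => f y + g y) s x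
      ≤ limsup ((fun y => dist (f y) (f x) / dist y x) + fun y => dist (g y) (g x) / dist y x)
          (𝓝[s \ {x}] x) :=
        limsup_le_limsup (Eventually.of_forall hslope) (isBoundedUnder_of ⟨0, fun _ =>
          div_nonneg dist_nonneg dist_nonneg⟩).isCoboundedUnder_le (isBoundedUnder_le_add hfle hgle)
    _ ≤ lipWithin f s x + lipWithin g s x := limsup_add_le hfge hfle hgge.isCoboundedUnder_le hgle

lemma tendsto_dist_div_dist_of_lipWithin_eq_zero {K : ℝ≥0} {g : X → Y} (hg : LipschitzWith K g)
    (h : lipWithin g s x = 0) :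
    Tendsto (fun y => dist (g y) (g x) / dist y x) (𝓝[s \ {x}] x) (𝓝 0) := by
  rcases (𝓝[s \ {x}] x).eq_or_neBot with hbot | hF
  · rw [hbot]
    exact tendsto_bot
  obtain ⟨hle, hge⟩ := hg.isBoundedUnder_dist_div_dist x (𝓝[s \ {x}] x)
  exact tendsto_of_le_liminf_of_limsup_le
    (le_liminf_of_le hle.isCoboundedUnder_ge (Eventually.of_forall fun _ =>
      div_nonneg dist_nonneg dist_nonneg)) h.le hle hge

end lipWithin

lemma IsWeakCheegerChart.ae_eq_zero_of_tendsto {X : Type*} [MetricSpace X] [MeasurableSpace X]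
    {n : ℕ} {μ : Measure X} {U : Set X} {φ : X → Euc n} (hw : IsWeakCheegerChart μ U φ) :
    ∀ᵐ x ∂μ.restrict U, ∀ L : Euc n →ₗ[ℝ] ℝ,
      Tendsto (fun y => |L (φ y - φ x)| / dist y x) (𝓝[U \ {x}] x) (𝓝 0) → L = 0 := by
  filter_upwards [hw.2 0 0 (LipschitzWith.const 0)] with x hx L hL
  exact hx.unique (by simpa [abs_sub_comm] using hL) (by simpa using tendsto_const_nhds)

theorem lip_is_norm_on_dual_general {X : Type*} [MetricSpace X]
    [MeasurableSpace X]
    (μ : Measure X)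
    {n : ℕ} (U : Set X) (φ : X → Euc n) (hw : IsWeakCheegerChart μ U φ) :
    ∀ᵐ x ∂μ.restrict U,
      (∀ lam : Euc n →ₗ[ℝ] ℝ, 0 ≤ lipWithin (fun y => lam (φ y)) U x) ∧
      (∀ (lam : Euc n →ₗ[ℝ] ℝ) (c : ℝ),
        lipWithin (fun y => (c • lam) (φ y)) U x = |c| * lipWithin (fun y => lam (φ y)) U x) ∧
      (∀ lam lam' : Euc n →ₗ[ℝ] ℝ,
        lipWithin (fun y => (lam + lam') (φ y)) U x ≤
          lipWithin (fun y => lam (φ y)) U x + lipWithin (fun y => lam' (φ y)) U x) ∧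
      (∀ lam : Euc n →ₗ[ℝ] ℝ, lam ≠ 0 → 0 < lipWithin (fun y => lam (φ y)) U x) := by
  obtain ⟨K, hK⟩ := hw.1.2.2
  have hlip (lam : Euc n →ₗ[ℝ] ℝ) :
      LipschitzWith (‖LinearMap.toContinuousLinearMap lam‖₊ * K) fun y => lam (φ y) :=
    (LinearMap.toContinuousLinearMap lam).lipschitz.comp hK
  filter_upwards [hw.ae_eq_zero_of_tendsto] with x hx
  refine ⟨fun lam => lipWithin_nonneg _ U x, fun lam c => lipWithin_const_mul (hlip lam) c,
    fun lam lam' => lipWithin_add_le (hlip lam) (hlip lam'), fun lam hne => ?_⟩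
  refine (lipWithin_nonneg _ U x).lt_of_ne' fun h0 => hne (hx lam ?_)
  simpa only [Real.dist_eq, map_sub] using tendsto_dist_div_dist_of_lipWithin_eq_zero (hlip lam) h0

/-- **Lemma:** on a weak Cheeger chart `(U, φ)`, for `μ`-a.e. `x ∈ U` the map
`λ ↦ Lip((λ ∘ φ)|_U)(x)` is a norm on `(ℝⁿ)*`; in particular it is positive on every
nonzero functional. -/
theorem lip_is_norm_on_dual {X : Type*} [MetricSpace X] [CompleteSpace X] [TopologicalSpace.SeparableSpace X]
    [MeasurableSpace X] [BorelSpace X]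
    (μ : Measure X) (hμ : ∀ s : Set X, Bornology.IsBounded s → μ s ≠ ∞)
    {n : ℕ} (U : Set X) (φ : X → Euc n) (hw : IsWeakCheegerChart μ U φ) :
    ∀ᵐ x ∂μ.restrict U,
      (∀ lam : Euc n →ₗ[ℝ] ℝ, 0 ≤ lipWithin (fun y => lam (φ y)) U x) ∧
      (∀ (lam : Euc n →ₗ[ℝ] ℝ) (c : ℝ),
        lipWithin (fun y => (c • lam) (φ y)) U x = |c| * lipWithin (fun y => lam (φ y)) U x) ∧
      (∀ lam lam' : Euc n →ₗ[ℝ] ℝ,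
        lipWithin (fun y => (lam + lam') (φ y)) U x ≤
          lipWithin (fun y => lam (φ y)) U x + lipWithin (fun y => lam' (φ y)) U x) ∧
      (∀ lam : Euc n →ₗ[ℝ] ℝ, lam ≠ 0 → 0 < lipWithin (fun y => lam (φ y)) U x) :=
  lip_is_norm_on_dual_general μ U φ hw
end
end
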